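/- Let μ > 0, κ > 2d, R > 0. Suppose X, Y are random vectors in ℝ^d with E[(|X|^κ + |Y|^κ)·1_{|X|+|Y| ≥ 2ρ}] ≤ N e^{-μρ²} for all ρ ≥ 2R (where N is a fixed constant), and E|X - Y|^κ ≤ N ρ^{d/2}|x-y|^{κ-d} + N e^{-μρ²} for all ρ ≥ 2R, for two points x, y ∈ B_R. Then E|X - Y|^κ ≤ N' |x - y|^{κ-2d} for a constant N' depending only on N, μ, R, d, κ. -/

import Mathlib

open MeasureTheory ENNReal

/-!
Away from the degenerate case `x = y`, write `r = |x - y|` and `c = κ - 2d`. If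
`e^{-μ(2R)²} ≤ r^c`, take `ρ = 2R`. Otherwise take `ρ` with `μρ² = -c ln r`, which is `≥ 2R`:
then `e^{-μρ²} = r^c` exactly, and `ρ^{d/2} r^{d/4} = (c/μ)^{d/4} (-r ln r)^{d/4} ≤ (c/μ)^{d/4}`,
so in both cases `ρ^{d/2} r^{κ-d} ≤ A r^c` for a constant `A`. When `x = y` the bound reads
`E|X-Y|^κ ≤ N e^{-μρ²}` for all large `ρ`, forcing `E|X-Y|^κ = 0`.
-/

namespace GaussianTail

open Real Filter

noncomputable def radius (μ c r : ℝ) : ℝ := √(c * -log r / μ)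

variable {μ c r : ℝ}

lemma exp_neg_mul_radius_sq (hμ : 0 < μ) (hc : 0 ≤ c) (hr0 : 0 < r) (hr1 : r ≤ 1) :
    exp (-μ * radius μ c r ^ 2) = r ^ c := by
  have hlog : 0 ≤ -log r := neg_nonneg.2 (log_nonpos hr0.le hr1)
  rw [radius, sq_sqrt (by positivity), rpow_def_of_pos hr0]
  congr 1
  field_simp

lemma radius_rpow_mul_rpow_le {a : ℝ} (hμ : 0 < μ) (hc : 0 ≤ c) (hr0 : 0 < r) (hr1 : r ≤ 1)
    (ha : 0 ≤ a) : radius μ c r ^ a * r ^ (a / 2) ≤ (c / μ) ^ (a / 2) := by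
  have hlog : 0 ≤ -log r := neg_nonneg.2 (log_nonpos hr0.le hr1)
  have hcμ : 0 ≤ c / μ := div_nonneg hc hμ.le
  calc radius μ c r ^ a * r ^ (a / 2)
      = (c / μ) ^ (a / 2) * (-log r * r) ^ (a / 2) := by
        rw [radius, sqrt_eq_rpow, ← rpow_mul (by positivity), mul_rpow hlog hr0.le,
          ← mul_assoc, ← mul_rpow hcμ hlog, one_div_mul_eq_div, mul_div_right_comm]
    _ ≤ (c / μ) ^ (a / 2) * 1 := by
        gcongr
        refine rpow_le_one (by positivity) ?_ (by positivity)
        rw [neg_mul]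
        exact (neg_le_abs _).trans (abs_log_mul_self_lt r hr0 hr1).le
    _ = (c / μ) ^ (a / 2) := mul_one _

lemma exists_radius {d R : ℝ} (hμ : 0 < μ) (hc : 0 < c) (hd : 0 ≤ d) (hr0 : 0 < r)
    (hr : r ≤ 2 * R) :
    ∃ ρ, 2 * R ≤ ρ ∧ ρ ^ (d / 2) * r ^ d ≤ (c / μ) ^ (d / 4) + (2 * R) ^ (d / 2) * (2 * R) ^ d ∧
      exp (-μ * ρ ^ 2) ≤ r ^ c := by
  have h2R : 0 ≤ 2 * R := hr0.le.trans hr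
  have hcμ : 0 ≤ (c / μ) ^ (d / 4) := rpow_nonneg (div_nonneg hc.le hμ.le) _
  by_cases hlarge : exp (-μ * (2 * R) ^ 2) ≤ r ^ c
  · refine ⟨2 * R, le_rfl, ?_, hlarge⟩
    have : (2 * R) ^ (d / 2) * r ^ d ≤ (2 * R) ^ (d / 2) * (2 * R) ^ d :=
      mul_le_mul_of_nonneg_left (rpow_le_rpow hr0.le hr hd) (rpow_nonneg h2R _)
    linarith
  push Not at hlarge
  have hr1 : r < 1 := by
    by_contra! h
    have hexp : exp (-μ * (2 * R) ^ 2) ≤ 1 := exp_le_one_iff.2 (by nlinarith [sq_nonneg R])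
    linarith [one_le_rpow h hc.le]
  have hexp := exp_neg_mul_radius_sq hμ hc.le hr0 hr1.le
  refine ⟨radius μ c r, ?_, ?_, hexp.le⟩
  · rw [← hexp, exp_lt_exp] at hlarge
    have hsq : μ * (2 * R) ^ 2 < μ * radius μ c r ^ 2 := by linarith
    exact (lt_of_pow_lt_pow_left₀ 2 (sqrt_nonneg _) (lt_of_mul_lt_mul_left hsq hμ.le)).le
  · have hbound := radius_rpow_mul_rpow_le (a := d / 2) hμ hc.le hr0 hr1.le (by positivity)
    rw [div_div, show (2 : ℝ) * 2 = 4 by norm_num] at hbound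
    calc radius μ c r ^ (d / 2) * r ^ d ≤ radius μ c r ^ (d / 2) * r ^ (d / 4) := by
          refine mul_le_mul_of_nonneg_left ?_ (rpow_nonneg (sqrt_nonneg _) _)
          exact rpow_le_rpow_of_exponent_ge hr0 hr1.le (by linarith)
      _ ≤ (c / μ) ^ (d / 4) + (2 * R) ^ (d / 2) * (2 * R) ^ d := by
          have : 0 ≤ (2 * R) ^ (d / 2) * (2 * R) ^ d := by positivity
          linarith

lemma eq_zero_of_forall_le_ofReal_mul_exp {I : ℝ≥0∞} {N a : ℝ} (hμ : 0 < μ)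
    (h : ∀ ρ, a ≤ ρ → I ≤ ENNReal.ofReal (N * exp (-μ * ρ ^ 2))) : I = 0 := by
  have hlim : Tendsto (fun ρ : ℝ => ENNReal.ofReal (N * exp (-μ * ρ ^ 2))) atTop (nhds 0) := by
    have := (tendsto_exp_atBot.comp ((tendsto_pow_atTop two_ne_zero).const_mul_atTop_of_neg
      (neg_neg_of_pos hμ))).const_mul N
    simpa using ENNReal.tendsto_ofReal this
  exact nonpos_iff_eq_zero.1 (ge_of_tendsto hlim (eventually_atTop.2 ⟨a, h⟩))

end GaussianTail

theorem stmt13_general (d : ℕ) (μ κ R N : ℝ) (hμ : 0 < μ) (hκ : 2 * d < κ)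
    (hN : 0 ≤ N) :
    ∃ N' : ℝ, ∀ (Ω : Type) (_ : MeasurableSpace Ω) (P : Measure Ω),
      IsProbabilityMeasure P →
      ∀ (X Y : Ω → EuclideanSpace ℝ (Fin d)), Measurable X → Measurable Y →
      ∀ (x y : EuclideanSpace ℝ (Fin d)), ‖x‖ ≤ R → ‖y‖ ≤ R →
      (∀ ρ : ℝ, 2 * R ≤ ρ →
        ∫⁻ ω in {ω | 2 * ρ ≤ ‖X ω‖ + ‖Y ω‖}, ENNReal.ofReal (‖X ω‖ ^ κ + ‖Y ω‖ ^ κ) ∂P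
          ≤ ENNReal.ofReal (N * Real.exp (-μ * ρ ^ 2))) →
      (∀ ρ : ℝ, 2 * R ≤ ρ →
        ∫⁻ ω, ENNReal.ofReal (‖X ω - Y ω‖ ^ κ) ∂P
          ≤ ENNReal.ofReal (N * ρ ^ ((d : ℝ) / 2) * ‖x - y‖ ^ (κ - d)
              + N * Real.exp (-μ * ρ ^ 2))) →
      ∫⁻ ω, ENNReal.ofReal (‖X ω - Y ω‖ ^ κ) ∂P
        ≤ ENNReal.ofReal (N' * ‖x - y‖ ^ (κ - 2 * d)) := by
  set A := ((κ - 2 * d) / μ) ^ ((d : ℝ) / 4) + (2 * R) ^ ((d : ℝ) / 2) * (2 * R) ^ (d : ℝ)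
  refine ⟨N * A + N, ?_⟩
  intro Ω _ P _ X Y _ _ x y hx hy _ hXY
  have hc : 0 < κ - 2 * d := by linarith
  have hr2R : ‖x - y‖ ≤ 2 * R := (norm_sub_le x y).trans (by linarith)
  rcases (norm_nonneg (x - y)).eq_or_lt with hr | hr
  · rw [← hr, Real.zero_rpow hc.ne', mul_zero, ENNReal.ofReal_zero, nonpos_iff_eq_zero]
    refine GaussianTail.eq_zero_of_forall_le_ofReal_mul_exp hμ (N := N) (a := 2 * R)
      fun ρ hρ => ?_
    simpa [← hr, Real.zero_rpow (by linarith : κ - d ≠ 0)] using hXY ρ hρ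
  obtain ⟨ρ, hρ, hρr, hexp⟩ := GaussianTail.exists_radius hμ hc (Nat.cast_nonneg d) hr hr2R
  refine (hXY ρ hρ).trans (ENNReal.ofReal_le_ofReal ?_)
  rw [show κ - d = d + (κ - 2 * d) by ring, Real.rpow_add hr]
  calc N * ρ ^ ((d : ℝ) / 2) * (‖x - y‖ ^ (d : ℝ) * ‖x - y‖ ^ (κ - 2 * d))
        + N * Real.exp (-μ * ρ ^ 2)
      = N * (ρ ^ ((d : ℝ) / 2) * ‖x - y‖ ^ (d : ℝ)) * ‖x - y‖ ^ (κ - 2 * d)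
        + N * Real.exp (-μ * ρ ^ 2) := by ring
    _ ≤ N * A * ‖x - y‖ ^ (κ - 2 * d) + N * ‖x - y‖ ^ (κ - 2 * d) := by gcongr
    _ = (N * A + N) * ‖x - y‖ ^ (κ - 2 * d) := by ring

/-- Let `μ > 0`, `κ > 2d`, `R > 0`, `N ≥ 0`. If random vectors `X, Y` in
`ℝ^d` satisfy `E[(|X|^κ + |Y|^κ) 1_{|X|+|Y| ≥ 2ρ}] ≤ N e^{-μρ²}` and
`E|X-Y|^κ ≤ N ρ^{d/2} |x-y|^{κ-d} + N e^{-μρ²}` for all `ρ ≥ 2R`, where `x, y ∈ B_R`,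
then `E|X-Y|^κ ≤ N' |x-y|^{κ-2d}` with `N'` depending only on `N, μ, R, d, κ`. -/
theorem stmt13 (d : ℕ) (μ κ R N : ℝ) (hμ : 0 < μ) (hκ : 2 * d < κ) (hR : 0 < R)
    (hN : 0 ≤ N) :
    ∃ N' : ℝ, ∀ (Ω : Type) (_ : MeasurableSpace Ω) (P : Measure Ω),
      IsProbabilityMeasure P →
      ∀ (X Y : Ω → EuclideanSpace ℝ (Fin d)), Measurable X → Measurable Y →
      ∀ (x y : EuclideanSpace ℝ (Fin d)), ‖x‖ ≤ R → ‖y‖ ≤ R →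
      (∀ ρ : ℝ, 2 * R ≤ ρ →
        ∫⁻ ω in {ω | 2 * ρ ≤ ‖X ω‖ + ‖Y ω‖}, ENNReal.ofReal (‖X ω‖ ^ κ + ‖Y ω‖ ^ κ) ∂P
          ≤ ENNReal.ofReal (N * Real.exp (-μ * ρ ^ 2))) →
      (∀ ρ : ℝ, 2 * R ≤ ρ →
        ∫⁻ ω, ENNReal.ofReal (‖X ω - Y ω‖ ^ κ) ∂P
          ≤ ENNReal.ofReal (N * ρ ^ ((d : ℝ) / 2) * ‖x - y‖ ^ (κ - d)
              + N * Real.exp (-μ * ρ ^ 2))) →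
      ∫⁻ ω, ENNReal.ofReal (‖X ω - Y ω‖ ^ κ) ∂P
        ≤ ENNReal.ofReal (N' * ‖x - y‖ ^ (κ - 2 * d)) :=
  stmt13_general d μ κ R N hμ hκ hN
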